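/- arXiv:1003.1958 — 3 statements merged into one kernel-verified Lean document; each statement's English description precedes it below -/
import Mathlib

section
/- There exist an absolute constant θ₀ ∈ (0,1) and an absolute constant C such that the following holds. Let G be a bipartite graph with parts A and B of size N, let 0 < θ ≤ θ₀ and d ∈ (0,1], and suppose that every vertex of G has degree at least (1−θ)dN, that every two distinct vertices lying in the same part of G have at most (1+θ)d²N common neighbours, and that θ^{4/3} d² N ≥ C. Then G contains at least (1 − θ^{1/3})·d·N pairwise edge-disjoint perfect matchings. -/
/-!
Let `k = ⌈(1 - θ^{1/3}) d N⌉`. A `k`-regular bipartite graph satisfies Hall's condition, so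
peeling off perfect matchings one at a time splits it into `k` edge-disjoint ones; it is
therefore enough to find a `k`-regular spanning subgraph of `G`. Take a largest subgraph with
all degrees at most `k`. If some `a₀ ∈ A` has degree `< k`, an alternating walk from `a₀` to a
vertex of `B` of degree `< k` would enlarge it; if there is none, the sets `S ⊆ A`, `T ⊆ B`
reached by alternating walks violate `k |S| ≤ e(S, B ∖ T) + k |T|`, i.e.
`k (|S| + |T'|) ≤ k N + e(S, T')` for `T' = B ∖ T`.

That cut condition is where the degree and codegree bounds enter. By symmetry `|T| ≤ |S|`, and
we may assume `|S| + |T| > N`. The codegree bound controls `∑_a deg_T(a)²`, hence the variance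
of the degrees into `T`; Cauchy–Schwarz over `A ∖ S`, which has fewer than `|T|` vertices, gives
`e(S, T) ≥ (1 - θ) d |S| |T| - 2 θ^{1/2} d N |T| - |T| √N`, and this beats
`k (|S| + |T| - N) ≤ k |S| |T| / N` once `θ^{4/3} d² N` is large.
-/

open Finset

/-- `M` is a perfect matching of the bipartite graph with parts two copies of `Fin N`
and edge set `E`. -/
def IsPMatching (N : ℕ) (E M : Finset (Fin N × Fin N)) : Prop :=
  M ⊆ E ∧ ∃ σ : Equiv.Perm (Fin N), M = Finset.univ.image fun a => (a, σ a)

section Filter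

variable {ι : Type*} [DecidableEq ι] {F : Finset ι} {e : ι} (p : ι → Prop) [DecidablePred p]

lemma card_filter_insert_of_notMem (he : e ∉ F) :
    #{x ∈ insert e F | p x} = #{x ∈ F | p x} + if p e then 1 else 0 := by
  rw [filter_insert]
  split_ifs
  · exact card_insert_of_notMem fun h => he (mem_filter.1 h).1
  · rfl

lemma card_filter_erase_add_of_mem (he : e ∈ F) :
    #{x ∈ F.erase e | p x} + (if p e then 1 else 0) = #{x ∈ F | p x} := by
  rw [filter_erase]
  split_ifs with h
  · exact card_erase_add_one (mem_filter.2 ⟨he, h⟩)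
  · rw [erase_eq_of_notMem fun h' => h (mem_filter.1 h').2]
    rfl

end Filter

lemma sq_card_mul_sum_sub_le {ι : Type*} [Fintype ι] [DecidableEq ι] (x : ι → ℝ)
    (s : Finset ι) :
    (Fintype.card ι * ∑ i ∈ s, x i - #s * ∑ i, x i) ^ 2 ≤
      #sᶜ * (Fintype.card ι * (Fintype.card ι * ∑ i, x i ^ 2 - (∑ i, x i) ^ 2)) := by
  set n : ℝ := (Fintype.card ι : ℝ)
  set W := ∑ i, x i
  have hcard : n = #s + #sᶜ := by
    rw [← Nat.cast_add, card_add_card_compl]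
  have hsplit : n * ∑ i ∈ s, x i - #s * W = -∑ i ∈ sᶜ, (n * x i - W) := by
    rw [sum_sub_distrib, ← mul_sum, sum_const, nsmul_eq_mul, hcard]
    have := sum_add_sum_compl s x
    linear_combination (↑(#s) + ↑(#sᶜ)) * this
  have hvar : ∑ i, (n * x i - W) ^ 2 = n * (n * ∑ i, x i ^ 2 - W ^ 2) := by
    simp only [sub_sq, mul_pow, sum_add_distrib, sum_sub_distrib, ← mul_sum, ← sum_mul,
      sum_const, card_univ, nsmul_eq_mul]
    ring
  calc _ = (∑ i ∈ sᶜ, (n * x i - W)) ^ 2 := by rw [hsplit, neg_sq]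
    _ ≤ #sᶜ * ∑ i ∈ sᶜ, (n * x i - W) ^ 2 := sq_sum_le_card_mul_sum_sq
    _ ≤ #sᶜ * ∑ i, (n * x i - W) ^ 2 := by
      gcongr
      exact subset_univ _
    _ = _ := by rw [hvar]

lemma pow_rpow_div_natCast {u : ℝ} (hu : 0 ≤ u) {n : ℕ} (hn : n ≠ 0) (m : ℕ) :
    (u ^ n) ^ ((m : ℝ) / n) = u ^ m := by
  rw [← Real.rpow_natCast u n, ← Real.rpow_mul hu, ← Real.rpow_natCast]
  congr 1
  field_simp

namespace Bipartite

section Degrees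

variable {α β : Type*}

def leftDeg [DecidableEq α] (F : Finset (α × β)) (a : α) : ℕ :=
  #{e ∈ F | e.1 = a}

def rightDeg [DecidableEq β] (F : Finset (α × β)) (b : β) : ℕ :=
  #{e ∈ F | e.2 = b}

def edgesBetween [DecidableEq α] [DecidableEq β] (E : Finset (α × β))
    (S : Finset α) (T : Finset β) : ℕ :=
  #{e ∈ E | e.1 ∈ S ∧ e.2 ∈ T}

def MaxDegLE [DecidableEq α] [DecidableEq β] (k : ℕ) (F : Finset (α × β)) : Prop :=
  (∀ a, leftDeg F a ≤ k) ∧ ∀ b, rightDeg F b ≤ k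

lemma sum_leftDeg [DecidableEq α] (F : Finset (α × β)) (S : Finset α) :
    ∑ a ∈ S, leftDeg F a = #{e ∈ F | e.1 ∈ S} :=
  sum_card_fiberwise_eq_card_filter _ _ _

lemma sum_rightDeg [DecidableEq β] (F : Finset (α × β)) (T : Finset β) :
    ∑ b ∈ T, rightDeg F b = #{e ∈ F | e.2 ∈ T} :=
  sum_card_fiberwise_eq_card_filter _ _ _

lemma leftDeg_eq_card_filter_mem [DecidableEq α] [DecidableEq β] [Fintype β]
    (F : Finset (α × β)) (a : α) :
    leftDeg F a = #{b | (a, b) ∈ F} := by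
  refine card_nbij' Prod.snd (fun b => (a, b)) ?_ ?_ ?_ fun _ _ => rfl
  · rintro ⟨_, b⟩ he
    obtain ⟨he, rfl⟩ := mem_filter.1 he
    simpa using he
  · intro b hb
    simp_all
  · rintro ⟨_, b⟩ he
    obtain ⟨-, rfl⟩ := mem_filter.1 he
    rfl

lemma rightDeg_eq_card_filter_mem [DecidableEq α] [DecidableEq β] [Fintype α]
    (F : Finset (α × β)) (b : β) :
    rightDeg F b = #{a | (a, b) ∈ F} := by
  refine card_nbij' Prod.fst (fun a => (a, b)) ?_ ?_ ?_ fun _ _ => rfl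
  · rintro ⟨a, _⟩ he
    obtain ⟨he, rfl⟩ := mem_filter.1 he
    simpa using he
  · intro a ha
    simp_all
  · rintro ⟨a, _⟩ he
    obtain ⟨-, rfl⟩ := mem_filter.1 he
    rfl

lemma leftDeg_sdiff_add [DecidableEq α] [DecidableEq β] {F M : Finset (α × β)} (h : M ⊆ F)
    (a : α) :
    leftDeg (F \ M) a + leftDeg M a = leftDeg F a := by
  rw [leftDeg, leftDeg, leftDeg, ← card_union_of_disjoint
    (disjoint_filter_filter sdiff_disjoint), ← filter_union, sdiff_union_of_subset h]

lemma rightDeg_sdiff_add [DecidableEq α] [DecidableEq β] {F M : Finset (α × β)} (h : M ⊆ F)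
    (b : β) :
    rightDeg (F \ M) b + rightDeg M b = rightDeg F b := by
  rw [rightDeg, rightDeg, rightDeg, ← card_union_of_disjoint
    (disjoint_filter_filter sdiff_disjoint), ← filter_union, sdiff_union_of_subset h]

end Degrees

section Reroute

variable {α β : Type*} [DecidableEq α] [DecidableEq β] {F : Finset (α × β)} {a : α}
  {b₁ b₂ : β}

def reroute (F : Finset (α × β)) (a : α) (b₂ b₁ : β) : Finset (α × β) :=
  insert (a, b₁) (F.erase (a, b₂))

lemma card_reroute (h₁ : (a, b₁) ∉ F) (h₂ : (a, b₂) ∈ F) :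
    #(reroute F a b₂ b₁) = #F := by
  rw [reroute, card_insert_of_notMem fun h => h₁ (mem_of_mem_erase h), card_erase_of_mem h₂]
  have := card_pos.2 ⟨_, h₂⟩
  omega

lemma leftDeg_reroute (h₁ : (a, b₁) ∉ F) (h₂ : (a, b₂) ∈ F) (a' : α) :
    leftDeg (reroute F a b₂ b₁) a' = leftDeg F a' := by
  have := card_filter_erase_add_of_mem (fun e : α × β => e.1 = a') h₂
  rw [leftDeg, reroute, card_filter_insert_of_notMem _ fun h => h₁ (mem_of_mem_erase h), leftDeg]
  omega

lemma rightDeg_reroute (h₁ : (a, b₁) ∉ F) (h₂ : (a, b₂) ∈ F) (b : β) :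
    rightDeg (reroute F a b₂ b₁) b + (if b₂ = b then 1 else 0) =
      rightDeg F b + if b₁ = b then 1 else 0 := by
  have := card_filter_erase_add_of_mem (fun e : α × β => e.2 = b) h₂
  rw [rightDeg, reroute, card_filter_insert_of_notMem _ fun h => h₁ (mem_of_mem_erase h),
    rightDeg]
  dsimp only at this ⊢
  omega

end Reroute

section Augment

variable {α β : Type*} [DecidableEq α] [DecidableEq β] {E F : Finset (α × β)} {a₀ a : α}
  {b b₁ b₂ : β} {k n : ℕ}

/-- Some walk from `a₀` to `b` alternates between edges of `E \ F` and of `F`, and uses `n` edges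
of `F`. -/
inductive AltReach (E F : Finset (α × β)) (a₀ : α) : β → ℕ → Prop
  | base {b : β} : (a₀, b) ∈ E \ F → AltReach E F a₀ b 0
  | step {b' : β} {a : α} {b : β} {n : ℕ} :
      AltReach E F a₀ b' n → (a, b') ∈ F → (a, b) ∈ E \ F → AltReach E F a₀ b (n + 1)

/-- A walk with `n` edges of `F` only visits vertices reachable with at most `n` such edges, so
it uses neither the removed edge `(a, b₂)` nor the added edge `(a, b₁)`. -/
lemma AltReach.reroute (h : AltReach E F a₀ b n) (hb₁ : ∀ j ≤ n, ¬AltReach E F a₀ b₁ j)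
    (hb₂ : ∀ j < n, ¬AltReach E F a₀ b₂ j) :
    AltReach E (reroute F a b₂ b₁) a₀ b n := by
  induction h with
  | base hb =>
    have hne : _ ≠ b₁ := fun h => hb₁ 0 le_rfl (h ▸ .base hb)
    refine .base (mem_sdiff.2 ⟨(mem_sdiff.1 hb).1, ?_⟩)
    simp [Bipartite.reroute, hne, (mem_sdiff.1 hb).2]
  | @step b' a' b n hb' ha'b' ha'b ih =>
    have hne : b ≠ b₁ := fun h => hb₁ (n + 1) le_rfl (h ▸ .step hb' ha'b' ha'b)
    have hne' : b' ≠ b₂ := fun h => hb₂ n n.lt_succ_self (h ▸ hb')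
    refine .step (ih (fun j hj => hb₁ j (by omega)) (fun j hj => hb₂ j (by omega))) ?_
      (mem_sdiff.2 ⟨(mem_sdiff.1 ha'b).1, ?_⟩)
    · simp [Bipartite.reroute, hne', ha'b']
    · simp [Bipartite.reroute, hne, (mem_sdiff.1 ha'b).2]

lemma MaxDegLE.insert (hF : MaxDegLE k F) (h : (a₀, b) ∉ F) (ha₀ : leftDeg F a₀ < k)
    (hb : rightDeg F b < k) : MaxDegLE k (insert (a₀, b) F) := by
  refine ⟨fun a => ?_, fun b' => ?_⟩
  · have hdeg := card_filter_insert_of_notMem (fun e : α × β => e.1 = a) h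
    have := hF.1 a
    rw [leftDeg] at *
    by_cases ha : a₀ = a
    · subst ha; simp only [if_true] at hdeg; omega
    · simp only [ha, if_false] at hdeg; omega
  · have hdeg := card_filter_insert_of_notMem (fun e : α × β => e.2 = b') h
    have := hF.2 b'
    rw [rightDeg] at *
    by_cases hb' : b = b'
    · subst hb'; simp only [if_true] at hdeg; omega
    · simp only [hb', if_false] at hdeg; omega

lemma MaxDegLE.reroute (hF : MaxDegLE k F) (h₁ : (a, b₁) ∉ F) (h₂ : (a, b₂) ∈ F)
    (hb₁ : rightDeg F b₁ < k) : MaxDegLE k (reroute F a b₂ b₁) := by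
  refine ⟨fun a' => leftDeg_reroute h₁ h₂ a' ▸ hF.1 a', fun b => ?_⟩
  have hdeg := rightDeg_reroute h₁ h₂ b
  have := hF.2 b
  by_cases hb : b₁ = b
  · subst hb; split_ifs at hdeg <;> omega
  · split_ifs at hdeg <;> omega

/-- Take a shortest alternating walk to a vertex `b₁` of deficient degree. Rerouting its last
`F`-edge `(a, b₂)` to `(a, b₁)` moves the deficiency to `b₂`, which is closer to `a₀`. -/
theorem exists_augment (hFE : F ⊆ E) (hF : MaxDegLE k F) (ha₀ : leftDeg F a₀ < k)
    (hb : AltReach E F a₀ b n) (hbk : rightDeg F b < k) :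
    ∃ F' ⊆ E, MaxDegLE k F' ∧ #F' = #F + 1 := by
  induction n using Nat.strong_induction_on generalizing F b with
  | _ n ih =>
  classical
  obtain ⟨m, ⟨b₁, hb₁, hb₁k⟩, hmin⟩ :=
    Nat.findX (p := fun m => ∃ b, AltReach E F a₀ b m ∧ rightDeg F b < k) ⟨n, b, hb, hbk⟩
  have hmn : m ≤ n := not_lt.1 fun h => hmin n h ⟨b, hb, hbk⟩
  cases hb₁ with
  | base h =>
    exact ⟨insert (a₀, b₁) F, insert_subset (mem_sdiff.1 h).1 hFE,
      hF.insert (mem_sdiff.1 h).2 ha₀ hb₁k, card_insert_of_notMem (mem_sdiff.1 h).2⟩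
  | @step b₂ a _ m hb₂ hab₂ hab₁ =>
    obtain ⟨j, hb₂j, hjmin⟩ := Nat.findX (p := AltReach E F a₀ b₂) ⟨m, hb₂⟩
    have hjm : j ≤ m := not_lt.1 fun h => hjmin m h hb₂
    have hab₁F := (mem_sdiff.1 hab₁).2
    have hb₂b₁ : b₂ ≠ b₁ := fun h => hab₁F (h ▸ hab₂)
    have hb₂k : rightDeg (reroute F a b₂ b₁) b₂ < k := by
      have h := rightDeg_reroute hab₁F hab₂ b₂
      rw [if_pos rfl, if_neg hb₂b₁.symm] at h
      have := hF.2 b₂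
      omega
    obtain ⟨F', hF'E, hF', hcard⟩ := ih j (by omega) (F := reroute F a b₂ b₁)
      (insert_subset (mem_sdiff.1 hab₁).1 ((erase_subset _ _).trans hFE))
      (hF.reroute hab₁F hab₂ hb₁k) (leftDeg_reroute hab₁F hab₂ a₀ ▸ ha₀)
      (hb₂j.reroute (fun i hi h => hmin i (by omega) ⟨b₁, h, hb₁k⟩) hjmin) hb₂k
    exact ⟨F', hF'E, hF', by rw [hcard, card_reroute hab₁F hab₂]⟩

end Augment

section Factor

variable {α β : Type*} [DecidableEq α] [DecidableEq β] {E F : Finset (α × β)} {k : ℕ}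

lemma edgesBetween_compl_add_lt [Fintype β] {S : Finset α} {T : Finset β} (hFE : F ⊆ E)
    (hST : ∀ a ∈ S, ∀ b ∉ T, (a, b) ∈ E → (a, b) ∈ F)
    (hTS : ∀ a b, (a, b) ∈ F → b ∈ T → a ∈ S)
    (hT : ∀ b ∈ T, rightDeg F b = k) (hS : ∑ a ∈ S, leftDeg F a < k * #S) :
    edgesBetween E S Tᶜ + k * #T < k * #S := by
  have hout : edgesBetween E S Tᶜ = #{e ∈ F | e.1 ∈ S ∧ e.2 ∉ T} := by
    rw [edgesBetween]
    congr 1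
    ext e
    simp only [mem_filter, mem_compl]
    exact ⟨fun ⟨he, hS, hT⟩ => ⟨hST _ hS _ hT he, hS, hT⟩,
      fun ⟨he, hS, hT⟩ => ⟨hFE he, hS, hT⟩⟩
  have hin : k * #T = #{e ∈ F | e.1 ∈ S ∧ e.2 ∈ T} := by
    rw [mul_comm, ← sum_const_nat hT, sum_rightDeg]
    congr 1
    ext e
    simp only [mem_filter]
    exact ⟨fun ⟨he, hT⟩ => ⟨he, hTS _ _ he hT, hT⟩, fun ⟨he, _, hT⟩ => ⟨he, hT⟩⟩
  have hsplit := card_filter_add_card_filter_not (s := {e ∈ F | e.1 ∈ S}) (fun e => e.2 ∈ T)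
  simp only [filter_filter, ← sum_leftDeg] at hsplit
  omega

lemma mul_card_le_edgesBetween_compl_add [Fintype β] {N : ℕ} (hβ : Fintype.card β = N)
    (h : ∀ S T, k * (#S + #T) ≤ k * N + edgesBetween E S T) (S : Finset α) (T : Finset β) :
    k * #S ≤ edgesBetween E S Tᶜ + k * #T := by
  have hT : k * (N - #T) + k * #T = k * N := by
    rw [← mul_add, Nat.sub_add_cancel (card_le_univ T |>.trans_eq hβ)]
  have := h S Tᶜ
  rw [card_compl, hβ, mul_add] at this
  omega

theorem exists_leftRegular_subset [Fintype α] [Fintype β]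
    (h : ∀ S T, k * #S ≤ edgesBetween E S Tᶜ + k * #T) :
    ∃ F ⊆ E, (∀ a, leftDeg F a = k) ∧ ∀ b, rightDeg F b ≤ k := by
  classical
  obtain ⟨F, hF, hmax⟩ := ({F ∈ E.powerset | MaxDegLE k F}).exists_max_image card
    ⟨∅, mem_filter.2 ⟨empty_mem_powerset _, by simp [MaxDegLE, leftDeg, rightDeg]⟩⟩
  rw [mem_filter, mem_powerset] at hF
  obtain ⟨hFE, hF⟩ := hF
  refine ⟨F, hFE, fun a₀ => ?_, hF.2⟩
  by_contra hne
  have ha₀ : leftDeg F a₀ < k := lt_of_le_of_ne (hF.1 a₀) hne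
  by_cases hreach : ∃ b n, AltReach E F a₀ b n ∧ rightDeg F b < k
  · obtain ⟨b, n, hb, hbk⟩ := hreach
    obtain ⟨F', hF'E, hF', hcard⟩ := exists_augment hFE hF ha₀ hb hbk
    have := hmax F' (mem_filter.2 ⟨mem_powerset.2 hF'E, hF'⟩)
    omega
  simp only [not_exists, not_and, not_lt] at hreach
  -- No augmenting walk from `a₀`: the vertices reached by alternating walks violate `h`.
  let T : Finset β := {b | ∃ n, AltReach E F a₀ b n}
  let S : Finset α := insert a₀ ({a | ∃ b ∈ T, (a, b) ∈ F} : Finset α)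
  refine absurd (h S T) (not_le.2 (edgesBetween_compl_add_lt hFE ?_ ?_ ?_ ?_))
  · intro a ha b hb hab
    by_contra habF
    apply hb
    simp only [S, T, mem_insert, mem_filter, mem_univ, true_and] at ha ⊢
    rcases ha with rfl | ⟨b', ⟨n, hb'⟩, hab'⟩
    · exact ⟨0, .base (mem_sdiff.2 ⟨hab, habF⟩)⟩
    · exact ⟨n + 1, .step hb' hab' (mem_sdiff.2 ⟨hab, habF⟩)⟩
  · intro a b hab hb
    exact mem_insert_of_mem (mem_filter.2 ⟨mem_univ _, b, hb, hab⟩)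
  · intro b hb
    obtain ⟨n, hbn⟩ := (mem_filter.1 hb).2
    exact le_antisymm (hF.2 b) (hreach b n hbn)
  · calc ∑ a ∈ S, leftDeg F a < ∑ _a ∈ S, k :=
          sum_lt_sum (fun a _ => hF.1 a) ⟨a₀, mem_insert_self _ _, ha₀⟩
      _ = k * #S := by rw [sum_const, smul_eq_mul, mul_comm]

lemma rightDeg_eq_of_leftDeg_eq [Fintype α] [Fintype β]
    (hcard : Fintype.card α = Fintype.card β) (hl : ∀ a, leftDeg F a = k)
    (hr : ∀ b, rightDeg F b ≤ k) (b : β) : rightDeg F b = k := by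
  have hsum : ∑ b, rightDeg F b = ∑ _b : β, k := by
    rw [sum_rightDeg, sum_const, card_univ, ← hcard, ← card_univ, ← sum_const,
      ← sum_congr rfl fun a _ => hl a, sum_leftDeg]
    simp
  exact (sum_eq_sum_iff_of_le fun b _ => hr b).1 hsum b (mem_univ b)

end Factor

section Matchings

variable {α β : Type*} [DecidableEq α] [DecidableEq β] {F M : Finset (α × β)} {k : ℕ}

variable [Fintype α]

def matchingOf (σ : α ≃ β) : Finset (α × β) :=
  univ.image fun a => (a, σ a)

lemma leftDeg_matchingOf (σ : α ≃ β) (a : α) : leftDeg (matchingOf σ) a = 1 := by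
  rw [leftDeg, card_eq_one]
  exact ⟨(a, σ a), by ext ⟨a', b⟩; simp [matchingOf]; grind⟩

lemma rightDeg_matchingOf (σ : α ≃ β) (b : β) : rightDeg (matchingOf σ) b = 1 := by
  rw [rightDeg, card_eq_one]
  exact ⟨(σ.symm b, b), by ext ⟨a', b'⟩; simp [matchingOf]; grind⟩

lemma matchingOf_subset {σ : α ≃ β} (h : ∀ a, (a, σ a) ∈ F) : matchingOf σ ⊆ F := by
  intro e he
  obtain ⟨a, -, rfl⟩ := mem_image.1 he
  exact h a

variable [Fintype β]

lemma card_eq_of_regular (hk : 0 < k) (hl : ∀ a, leftDeg F a = k) (hr : ∀ b, rightDeg F b = k) :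
    Fintype.card α = Fintype.card β := by
  have := card_mul_eq_card_mul (fun a b => (a, b) ∈ F) (s := univ) (t := univ)
    (fun a _ => by simpa [bipartiteAbove, ← leftDeg_eq_card_filter_mem] using hl a)
    (fun b _ => by simpa [bipartiteBelow, ← rightDeg_eq_card_filter_mem] using hr b)
  simpa [hk.ne'] using this

lemma exists_equiv_of_regular (hk : 0 < k) (hl : ∀ a, leftDeg F a = k)
    (hr : ∀ b, rightDeg F b = k) : ∃ σ : α ≃ β, ∀ a, (a, σ a) ∈ F := by
  have hall (A : Finset α) : #A ≤ #{b | ∃ a ∈ A, (a, b) ∈ F} := by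
    refine le_of_mul_le_mul_right (card_mul_le_card_mul (fun a b => (a, b) ∈ F) ?_ ?_) hk
    · intro a ha
      rw [← hl a, leftDeg_eq_card_filter_mem]
      exact card_le_card fun b hb => by
        simp only [bipartiteAbove, mem_filter, mem_univ, true_and] at hb ⊢
        exact ⟨⟨a, ha, hb⟩, hb⟩
    · intro b _
      rw [← hr b, rightDeg_eq_card_filter_mem]
      exact card_le_card fun a ha => by simp_all
  obtain ⟨f, hf, hfF⟩ :=
    (Fintype.all_card_le_filter_rel_iff_exists_injective (fun a b => (a, b) ∈ F)).1 hall
  exact ⟨.ofBijective f ((Fintype.bijective_iff_injective_and_card f).2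
    ⟨hf, card_eq_of_regular hk hl hr⟩), hfF⟩

theorem exists_disjoint_matchings_of_regular [Nonempty α] (k : ℕ) {F : Finset (α × β)}
    (hl : ∀ a, leftDeg F a = k) (hr : ∀ b, rightDeg F b = k) :
    ∃ 𝒮 : Finset (Finset (α × β)), #𝒮 = k ∧
      (∀ M ∈ 𝒮, M ⊆ F ∧ ∃ σ : α ≃ β, M = matchingOf σ) ∧
      (𝒮 : Set (Finset (α × β))).Pairwise Disjoint := by
  induction k generalizing F with
  | zero => exact ⟨∅, rfl, by simp, by simp⟩
  | succ k ih =>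
    obtain ⟨σ, hσ⟩ := exists_equiv_of_regular k.succ_pos hl hr
    have hMF := matchingOf_subset hσ
    obtain ⟨𝒮, h𝒮, h𝒮F, h𝒮disj⟩ := ih (F := F \ matchingOf σ)
      (fun a => by have := leftDeg_sdiff_add hMF a; rw [leftDeg_matchingOf, hl] at this; omega)
      (fun b => by have := rightDeg_sdiff_add hMF b; rw [rightDeg_matchingOf, hr] at this; omega)
    have hdisj : ∀ M ∈ 𝒮, Disjoint (matchingOf σ) M := fun M hM =>
      disjoint_of_subset_right (h𝒮F M hM).1 disjoint_sdiff
    have hnotMem : matchingOf σ ∉ 𝒮 := fun h =>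
      univ_nonempty.ne_empty (by simpa [matchingOf] using disjoint_self.1 (hdisj _ h))
    refine ⟨insert (matchingOf σ) 𝒮, by rw [card_insert_of_notMem hnotMem, h𝒮], ?_, ?_⟩
    · simp only [mem_insert, forall_eq_or_imp]
      exact ⟨⟨hMF, σ, rfl⟩,
        fun M hM => ⟨(h𝒮F M hM).1.trans sdiff_subset, (h𝒮F M hM).2⟩⟩
    · rw [coe_insert]
      exact h𝒮disj.insert_of_symm fun M hM _ => hdisj M hM

end Matchings

/- Real inequalities behind the cut condition: `n = N`, `s = |S|`, `t = |T|`, `W = e(A, T)`,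
`Q = ∑ₐ deg_T(a)²`, `e = e(S, T)` and `θ = u⁶`. -/
section Estimates

lemma variance_le_of_bounds {n t W Q θ d : ℝ} (hθ : 0 ≤ θ) (hθ' : θ ≤ 1) (hd : 0 ≤ d)
    (hn : 0 ≤ n) (ht : 0 ≤ t) (hWlo : (1 - θ) * d * n * t ≤ W) (hWhi : W ≤ t * n)
    (hQ : Q ≤ t ^ 2 * ((1 + θ) * d ^ 2 * n) + W) :
    n * Q - W ^ 2 ≤ 3 * θ * d ^ 2 * n ^ 2 * t ^ 2 + t * n ^ 2 := by
  have hW2 : ((1 - θ) * d * n * t) ^ 2 ≤ W ^ 2 :=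
    pow_le_pow_left₀ (by have := sub_nonneg.2 hθ'; positivity) hWlo 2
  have hnQ : n * Q ≤ n * (t ^ 2 * ((1 + θ) * d ^ 2 * n) + t * n) :=
    mul_le_mul_of_nonneg_left (by linarith) hn
  nlinarith [mul_nonneg (mul_nonneg hθ hθ) (by positivity : 0 ≤ d ^ 2 * n ^ 2 * t ^ 2)]

lemma sub_le_of_sq_sub_le {n s t W e V u d : ℝ} (hn : 0 ≤ n) (ht : 0 ≤ t) (htn : t ≤ n)
    (hu : 0 ≤ u) (hd : 0 ≤ d) (hdev : (n * e - s * W) ^ 2 ≤ t * (n * V))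
    (hV : V ≤ 3 * u ^ 6 * d ^ 2 * n ^ 2 * t ^ 2 + t * n ^ 2) :
    s * W - n * (2 * u ^ 3 * d * n * t + t * √n) ≤ n * e := by
  have hsqrt := Real.sq_sqrt hn
  have hR : 0 ≤ n * (2 * u ^ 3 * d * n * t + t * √n) := by positivity
  suffices s * W - n * e ≤ n * (2 * u ^ 3 * d * n * t + t * √n) by linarith
  refine le_of_sq_le_sq ?_ hR
  have htt : t ^ 3 ≤ t ^ 2 * n := by nlinarith [mul_nonneg (sq_nonneg t) (sub_nonneg.2 htn)]
  calc (s * W - n * e) ^ 2 = (n * e - s * W) ^ 2 := by ring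
    _ ≤ t * (n * (3 * u ^ 6 * d ^ 2 * n ^ 2 * t ^ 2 + t * n ^ 2)) := by
      refine hdev.trans ?_
      gcongr
    _ ≤ 4 * u ^ 6 * d ^ 2 * n ^ 4 * t ^ 2 + 4 * (u ^ 3 * d * t ^ 2 * n ^ 3 * √n)
          + t ^ 2 * n ^ 2 * √n ^ 2 := by
      rw [hsqrt]
      nlinarith [mul_le_mul_of_nonneg_left htt (by positivity : 0 ≤ u ^ 6 * d ^ 2 * n ^ 3),
        (by positivity : 0 ≤ u ^ 6 * d ^ 2 * n ^ 4 * t ^ 2),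
        (by positivity : 0 ≤ u ^ 3 * d * t ^ 2 * n ^ 3 * √n)]
    _ = (n * (2 * u ^ 3 * d * n * t + t * √n)) ^ 2 := by ring

lemma error_terms_le {n s u d : ℝ} (hu : 0 < u) (hu' : u ≤ 1 / 21) (hd : 0 < d) (hd' : d ≤ 1)
    (hN : 100 ≤ u ^ 8 * d ^ 2 * n) (hns : n ≤ 2 * s) :
    s + 2 * u ^ 3 * d * n ^ 2 + n * √n ≤ (u ^ 2 - u ^ 6) * d * n * s := by
  have hn : 0 ≤ n := nonneg_of_mul_nonneg_right (by linarith) (by positivity : 0 < u ^ 8 * d ^ 2)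
  have hs : 0 ≤ s := by linarith
  have hu1 : u ≤ 1 := hu'.trans (by norm_num)
  have hq : 100 ≤ u ^ 2 * d * n := hN.trans <| by
    gcongr ?_ * ?_ * n
    · exact pow_le_pow_of_le_one hu.le hu1 (by norm_num)
    · exact pow_le_of_le_one hd.le hd' (by norm_num)
  have hq' : 10 ≤ u ^ 2 * d * √n := by
    have hsq : 100 ≤ (u ^ 2 * d * √n) ^ 2 := by
      rw [mul_pow, Real.sq_sqrt hn, mul_pow, ← pow_mul]
      refine hN.trans ?_
      gcongr ?_ * _ * _
      exact pow_le_pow_of_le_one hu.le hu1 (by norm_num)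
    nlinarith [(by positivity : 0 ≤ u ^ 2 * d * √n)]
  have hu6 : u ^ 6 ≤ u ^ 2 / 4 := by
    have : u ^ 4 ≤ (1 / 21) ^ 4 := pow_le_pow_left₀ hu.le hu' 4
    nlinarith [pow_pos hu 2]
  have h1 : s ≤ u ^ 2 * d * n * s / 4 := by nlinarith
  have h2 : 2 * u ^ 3 * d * n ^ 2 ≤ u ^ 2 * d * n * s / 4 := by
    have : 8 * u * n ≤ s := by nlinarith
    nlinarith [mul_le_mul_of_nonneg_left this (by positivity : 0 ≤ u ^ 2 * d * n)]
  have h3 : n * √n ≤ u ^ 2 * d * n * s / 4 := by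
    have h10 : 10 * √n ≤ u ^ 2 * d * n := by
      calc 10 * √n ≤ u ^ 2 * d * √n * √n := by gcongr
        _ = u ^ 2 * d * n := by rw [mul_assoc, Real.mul_self_sqrt hn]
    nlinarith [mul_le_mul_of_nonneg_left h10 hn,
      mul_le_mul_of_nonneg_left hns (by positivity : 0 ≤ u ^ 2 * d * n),
      (by positivity : 0 ≤ u ^ 2 * d * n * s)]
  nlinarith [mul_le_mul_of_nonneg_right hu6 (by positivity : 0 ≤ d * n * s)]

lemma mul_add_le_of_estimates {n s t W e k u d : ℝ} (hu : 0 < u) (hu' : u ≤ 1 / 21) (hd : 0 < d)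
    (hd' : d ≤ 1) (hN : 100 ≤ u ^ 8 * d ^ 2 * n) (hk : k ≤ (1 - u ^ 2) * d * n + 1)
    (hts : t ≤ s) (hsn : s ≤ n) (htn : t ≤ n) (hst : n + 1 ≤ s + t)
    (hW : (1 - u ^ 6) * d * n * t ≤ W)
    (he : s * W - n * (2 * u ^ 3 * d * n * t + t * √n) ≤ n * e) :
    k * (s + t) ≤ k * n + e := by
  have hn : 0 < n := by linarith
  have ht : 0 ≤ t := by linarith
  have hu2 : u ^ 2 ≤ 1 := pow_le_one₀ hu.le (hu'.trans (by norm_num))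
  have hx : (s + t - n) * n ≤ s * t := by
    nlinarith [mul_nonneg (sub_nonneg.2 hsn) (sub_nonneg.2 htn)]
  have herr := error_terms_le hu hu' hd hd' hN (by linarith : n ≤ 2 * s)
  suffices k * (s + t - n) * n ≤ n * e by nlinarith
  calc k * (s + t - n) * n = k * ((s + t - n) * n) := by ring
    _ ≤ ((1 - u ^ 2) * d * n + 1) * (s * t) := by
      have : 0 ≤ (1 - u ^ 2) * d * n := by have := sub_nonneg.2 hu2; positivity
      exact mul_le_mul hk hx (by nlinarith) (by linarith)
    _ ≤ s * ((1 - u ^ 6) * d * n * t) - n * (2 * u ^ 3 * d * n * t + t * √n) := by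
      nlinarith [mul_le_mul_of_nonneg_right herr ht]
    _ ≤ s * W - n * (2 * u ^ 3 * d * n * t + t * √n) := by gcongr; linarith
    _ ≤ n * e := he

end Estimates

section Pseudorandom

variable {α β : Type*} [DecidableEq α] [DecidableEq β] {E : Finset (α × β)}

lemma sum_card_neighbors [Fintype β] (E : Finset (α × β)) (S : Finset α) (T : Finset β) :
    ∑ a ∈ S, #{b ∈ T | (a, b) ∈ E} = edgesBetween E S T := by
  have h (a : α) : #{b ∈ T | (a, b) ∈ E} = leftDeg {e ∈ E | e.2 ∈ T} a := by
    rw [leftDeg_eq_card_filter_mem]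
    congr 1
    ext b
    simp [and_comm]
  rw [sum_congr rfl fun a _ => h a, sum_leftDeg, filter_filter, edgesBetween]
  simp only [and_comm]

lemma sum_sq_card_neighbors [Fintype α] (E : Finset (α × β)) (T : Finset β) :
    ∑ a, #{b ∈ T | (a, b) ∈ E} ^ 2 =
      ∑ b ∈ T, ∑ b' ∈ T, #{a | (a, b) ∈ E ∧ (a, b') ∈ E} := by
  let r : α → β × β → Prop := fun a p => (a, p.1) ∈ E ∧ (a, p.2) ∈ E
  have h (a : α) : #{b ∈ T | (a, b) ∈ E} ^ 2 = #((T ×ˢ T).bipartiteAbove r a) := by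
    rw [bipartiteAbove, filter_product (fun b => (a, b) ∈ E) (fun b => (a, b) ∈ E),
      card_product, sq]
  simp_rw [h, sum_card_bipartiteAbove_eq_sum_card_bipartiteBelow, sum_product]
  rfl

lemma sum_sq_card_neighbors_le [Fintype α] (T : Finset β) {c : ℝ} (hc : 0 ≤ c)
    (hcod : ∀ b₁ b₂, b₁ ≠ b₂ → (#{a | (a, b₁) ∈ E ∧ (a, b₂) ∈ E} : ℝ) ≤ c) :
    ∑ a, (#{b ∈ T | (a, b) ∈ E} : ℝ) ^ 2 ≤
      #T ^ 2 * c + ∑ b ∈ T, (rightDeg E b : ℝ) := by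
  have h := congrArg (Nat.cast : ℕ → ℝ) (sum_sq_card_neighbors E T)
  push_cast at h
  rw [h, sq, mul_assoc, ← nsmul_eq_mul, ← sum_const, ← sum_add_distrib]
  refine sum_le_sum fun b hb => ?_
  rw [← add_sum_erase T _ hb, add_comm]
  refine add_le_add ?_ (by simp only [and_self, rightDeg_eq_card_filter_mem, le_refl])
  calc ∑ b' ∈ T.erase b, (#{a | (a, b) ∈ E ∧ (a, b') ∈ E} : ℝ)
        ≤ #(T.erase b) • c :=
          sum_le_card_nsmul _ _ _ fun b' hb' => hcod b b' (ne_of_mem_erase hb').symm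
    _ ≤ #T * c := by
      rw [nsmul_eq_mul]
      gcongr
      exact erase_subset _ _

theorem mul_card_add_le_edgesBetween_of_card_le [Fintype α] [Fintype β] {N k : ℕ} {u d : ℝ}
    (hα : Fintype.card α = N) (hu : 0 < u) (hu' : u ≤ 1 / 21) (hd : 0 < d) (hd' : d ≤ 1)
    (hdeg : ∀ b, (1 - u ^ 6) * d * N ≤ rightDeg E b)
    (hcod : ∀ b₁ b₂, b₁ ≠ b₂ →
      (#{a | (a, b₁) ∈ E ∧ (a, b₂) ∈ E} : ℝ) ≤ (1 + u ^ 6) * d ^ 2 * N)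
    (hN : 100 ≤ u ^ 8 * d ^ 2 * N) (hk : k ≤ (1 - u ^ 2) * d * N + 1)
    {S : Finset α} {T : Finset β} (hTS : #T ≤ #S) :
    k * (#S + #T) ≤ k * N + edgesBetween E S T := by
  by_cases htriv : #S + #T ≤ N
  · exact (Nat.mul_le_mul_left k htriv).trans (Nat.le_add_right _ _)
  have hSN : #S ≤ N := hα ▸ card_le_univ S
  let x : α → ℝ := fun a => #{b ∈ T | (a, b) ∈ E}
  let W : ℝ := ∑ b ∈ T, (rightDeg E b : ℝ)
  have hsumS : ∑ a ∈ S, x a = edgesBetween E S T := by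
    simp only [x]; exact_mod_cast sum_card_neighbors E S T
  have hsum : ∑ a, x a = W := by
    simp only [x, W]
    rw [← Nat.cast_sum, ← Nat.cast_sum, sum_card_neighbors, sum_rightDeg, edgesBetween]
    simp
  have hWlo : (1 - u ^ 6) * d * N * #T ≤ W := by
    calc _ = ∑ _b ∈ T, (1 - u ^ 6) * d * N := by rw [sum_const, nsmul_eq_mul]; ring
      _ ≤ W := sum_le_sum fun b _ => hdeg b
  have hWhi : W ≤ #T * N := by
    calc W ≤ #T • (N : ℝ) := sum_le_card_nsmul _ _ _ fun b _ => by
          rw [rightDeg_eq_card_filter_mem, ← hα]; exact_mod_cast card_le_univ _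
      _ = _ := nsmul_eq_mul _ _
  have hQ := sum_sq_card_neighbors_le T (by positivity) hcod
  have hV := variance_le_of_bounds (n := N) (by positivity)
    (pow_le_one₀ hu.le (hu'.trans (by norm_num))) hd.le (Nat.cast_nonneg N) (Nat.cast_nonneg _)
    hWlo hWhi hQ
  have hdev := sq_card_mul_sum_sub_le x S
  have hV₀ := sq_sum_le_card_mul_sum_sq (s := univ) (f := x)
  rw [hsumS, hsum, card_compl, hα, Nat.cast_sub hSN] at hdev
  rw [hsum, card_univ, hα] at hV₀
  have hTS' : (N : ℝ) - #S ≤ #T := by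
    rw [sub_le_iff_le_add]; exact_mod_cast (not_le.1 htriv).le.trans_eq (add_comm _ _)
  have he := sub_le_of_sq_sub_le (Nat.cast_nonneg N) (Nat.cast_nonneg _)
    (by exact_mod_cast (hTS.trans hSN)) hu.le hd.le
    (hdev.trans (mul_le_mul_of_nonneg_right hTS' (mul_nonneg (Nat.cast_nonneg N)
      (sub_nonneg.2 hV₀)))) hV
  exact_mod_cast mul_add_le_of_estimates hu hu' hd hd' hN hk (by exact_mod_cast hTS)
    (by exact_mod_cast hSN) (by exact_mod_cast (hTS.trans hSN)) (by exact_mod_cast not_le.1 htriv)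
    hWlo he

lemma rightDeg_image_swap (E : Finset (α × β)) (a : α) :
    rightDeg (E.image Prod.swap) a = leftDeg E a := by
  rw [rightDeg, filter_image, card_image_of_injective _ Prod.swap_injective]
  rfl

lemma edgesBetween_image_swap (E : Finset (α × β)) (S : Finset α) (T : Finset β) :
    edgesBetween (E.image Prod.swap) T S = edgesBetween E S T := by
  rw [edgesBetween, filter_image, card_image_of_injective _ Prod.swap_injective, edgesBetween]
  simp only [Prod.fst_swap, Prod.snd_swap, and_comm]

theorem mul_card_add_le_edgesBetween [Fintype α] [Fintype β] {N k : ℕ} {θ d : ℝ}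
    (hα : Fintype.card α = N) (hβ : Fintype.card β = N) (hθ : 0 < θ) (hθ' : θ ≤ 1e-8)
    (hd : 0 < d) (hd' : d ≤ 1)
    (hdegL : ∀ a, (1 - θ) * d * N ≤ leftDeg E a)
    (hdegR : ∀ b, (1 - θ) * d * N ≤ rightDeg E b)
    (hcodL : ∀ a₁ a₂, a₁ ≠ a₂ →
      (#{b | (a₁, b) ∈ E ∧ (a₂, b) ∈ E} : ℝ) ≤ (1 + θ) * d ^ 2 * N)
    (hcodR : ∀ b₁ b₂, b₁ ≠ b₂ →
      (#{a | (a, b₁) ∈ E ∧ (a, b₂) ∈ E} : ℝ) ≤ (1 + θ) * d ^ 2 * N)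
    (hN : 100 ≤ θ ^ ((4 : ℝ) / 3) * d ^ 2 * N)
    (hk : k ≤ (1 - θ ^ ((1 : ℝ) / 3)) * d * N + 1)
    (S : Finset α) (T : Finset β) :
    k * (#S + #T) ≤ k * N + edgesBetween E S T := by
  -- Writing `θ = u⁶` makes the exponents `1/3` and `4/3` integral.
  obtain ⟨u, hu, rfl⟩ : ∃ u, 0 < u ∧ θ = u ^ 6 :=
    ⟨θ ^ ((6 : ℕ)⁻¹ : ℝ), by positivity,
      (Real.rpow_inv_natCast_pow hθ.le (by norm_num)).symm⟩
  have hu' : u ≤ 1 / 21 := (pow_le_pow_iff_left₀ hu.le (by norm_num) (by norm_num : 6 ≠ 0)).1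
    (hθ'.trans (by norm_num))
  rw [show (1 : ℝ) / 3 = (2 : ℕ) / (6 : ℕ) by norm_num,
    pow_rpow_div_natCast hu.le (by norm_num)] at hk
  rw [show (4 : ℝ) / 3 = (8 : ℕ) / (6 : ℕ) by norm_num,
    pow_rpow_div_natCast hu.le (by norm_num)] at hN
  rcases le_total #T #S with h | h
  · exact mul_card_add_le_edgesBetween_of_card_le hα hu hu' hd hd' hdegR hcodR hN hk h
  · have := mul_card_add_le_edgesBetween_of_card_le (E := E.image Prod.swap) hβ hu hu' hd hd'
      (fun a => rightDeg_image_swap E a ▸ hdegL a)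
      (fun a₁ a₂ h => by simpa using hcodL a₁ a₂ h)
      hN hk h
    rwa [edgesBetween_image_swap, add_comm] at this

end Pseudorandom

end Bipartite

open scoped Classical in
/-- there are absolute constants `θ₀ ∈ (0,1)` and `C` such that every
bipartite graph with parts of size `N`, minimum degree at least `(1-θ)dN`, codegrees
(within each part) at most `(1+θ)d²N`, with `0 < θ ≤ θ₀`, `d ∈ (0,1]` and
`θ^{4/3} d² N ≥ C`, contains at least `(1-θ^{1/3})dN` pairwise edge-disjoint perfect
matchings. -/
theorem stmt_8 :
    ∃ θ₀ : ℝ, θ₀ ∈ Set.Ioo (0 : ℝ) 1 ∧ ∃ C : ℝ,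
      ∀ (N : ℕ) (E : Finset (Fin N × Fin N)) (θ d : ℝ),
        0 < θ → θ ≤ θ₀ → 0 < d → d ≤ 1 →
        (∀ a : Fin N, (1 - θ) * d * N ≤ ((E.filter fun e => e.1 = a).card : ℝ)) →
        (∀ b : Fin N, (1 - θ) * d * N ≤ ((E.filter fun e => e.2 = b).card : ℝ)) →
        (∀ a₁ a₂ : Fin N, a₁ ≠ a₂ →
          ((Finset.univ.filter fun b => (a₁, b) ∈ E ∧ (a₂, b) ∈ E).card : ℝ)
            ≤ (1 + θ) * d ^ 2 * N) →
        (∀ b₁ b₂ : Fin N, b₁ ≠ b₂ →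
          ((Finset.univ.filter fun a => (a, b₁) ∈ E ∧ (a, b₂) ∈ E).card : ℝ)
            ≤ (1 + θ) * d ^ 2 * N) →
        C ≤ θ ^ ((4 : ℝ) / 3) * d ^ 2 * N →
        ∃ 𝒮 : Finset (Finset (Fin N × Fin N)),
          (1 - θ ^ ((1 : ℝ) / 3)) * d * N ≤ (𝒮.card : ℝ) ∧
          (∀ M ∈ 𝒮, IsPMatching N E M) ∧
          (𝒮 : Set (Finset (Fin N × Fin N))).Pairwise Disjoint := by
  refine ⟨1e-8, ⟨by norm_num, by norm_num⟩, 100,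
    fun N E θ d hθ hθ₀ hd hd₁ hdegA hdegB hcodA hcodB hC => ?_⟩
  have hN : 0 < N := Nat.pos_of_ne_zero fun h => by subst h; norm_num at hC
  have : Nonempty (Fin N) := ⟨⟨0, hN⟩⟩
  set k := ⌈(1 - θ ^ ((1 : ℝ) / 3)) * d * N⌉₊
  have hk : (k : ℝ) ≤ (1 - θ ^ ((1 : ℝ) / 3)) * d * N + 1 := by
    have : θ ^ ((1 : ℝ) / 3) ≤ 1 := Real.rpow_le_one hθ.le (by linarith) (by norm_num)
    exact (Nat.ceil_lt_add_one (by have := sub_nonneg.2 this; positivity)).le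
  have hcut := Bipartite.mul_card_add_le_edgesBetween (Fintype.card_fin N) (Fintype.card_fin N)
    hθ hθ₀ hd hd₁ hdegA hdegB hcodA hcodB hC hk
  obtain ⟨F, hFE, hl, hr⟩ := Bipartite.exists_leftRegular_subset
    (Bipartite.mul_card_le_edgesBetween_compl_add (Fintype.card_fin N) hcut)
  obtain ⟨𝒮, hcard, h𝒮, hdisj⟩ :=
    Bipartite.exists_disjoint_matchings_of_regular k hl
      (Bipartite.rightDeg_eq_of_leftDeg_eq rfl hl hr)
  exact ⟨𝒮, hcard ▸ Nat.le_ceil _,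
    fun M hM => ⟨(h𝒮 M hM).1.trans hFE, (h𝒮 M hM).2⟩, hdisj⟩
end

section
/- Let S_n denote the set of permutations of [n], and let f : S_n → ℝ be a function such that |f(π) − f(π')| ≤ u whenever the permutation π' is obtained from π by transposing two elements. If π is chosen uniformly at random from S_n, then for every t > 0, Pr(f(π) − E[f(π)] ≤ −t) ≤ exp(−2t²/(n u²)). -/
/-!
Martingale (Azuma–Hoeffding) argument along the exposure `σ ↦ (σ 0, rest)`: every permutation of
`Fin (n + 1)` is `decomposeFin.symm (p, e)` with `p = σ 0` and `e` a permutation of `Fin n`.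
The conditional means `μ p` of `f` given `σ 0 = p` differ pairwise by at most `u`, since left
multiplication by `swap p q` maps the fibre over `p` onto the fibre over `q`; so Hoeffding's lemma
bounds `𝔼 p, exp (λ (μ p - 𝔼 μ))` by `exp (λ² u² / 8)`, and on each fibre `f` is again
`u`-Lipschitz under transpositions of `Fin n`. Induction on `n` bounds `𝔼 σ, exp (λ (f σ - 𝔼 f))`
by `exp (λ² n u² / 8)`, and the Chernoff bound at `λ = 4 t / (n u²)` gives the tail estimate.
-/

open Finset Equiv Equiv.Perm
open scoped BigOperators

theorem Fintype.expect_exp_mul_sub_expect_le {ι : Type*} [Fintype ι] [Nonempty ι] (y : ι → ℝ)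
    {a b : ℝ} (hy : ∀ i, y i ∈ Set.Icc a b) (t : ℝ) :
    𝔼 i, Real.exp (t * (y i - 𝔼 j, y j)) ≤ Real.exp (t ^ 2 * (b - a) ^ 2 / 8) := by
  let _ : MeasurableSpace ι := ⊤
  have _ : DiscreteMeasurableSpace ι := ⟨fun _ => trivial⟩
  let μ := (PMF.uniformOfFintype ι).toMeasure
  have hμ (g : ι → ℝ) : ∫ i, g i ∂μ = 𝔼 i, g i := by
    simp [μ, PMF.integral_eq_sum, Fintype.expect_eq_sum_div_card, div_eq_inv_mul, Finset.mul_sum]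
  have hoeffding := (ProbabilityTheory.hasSubgaussianMGF_of_mem_Icc (μ := μ)
    (measurable_of_countable y).aemeasurable (MeasureTheory.ae_of_all _ hy)).mgf_le t
  simp only [ProbabilityTheory.mgf, hμ] at hoeffding
  convert hoeffding using 2
  push_cast
  rw [Real.norm_eq_abs, div_pow, sq_abs]
  ring

theorem Fintype.card_filter_ge_div_card_le_exp_mul_expect_exp {ι : Type*} [Fintype ι]
    (g : ι → ℝ) {s : ℝ} (hs : 0 ≤ s) (t : ℝ) [DecidablePred fun i => t ≤ g i] :
    (#{i | t ≤ g i} : ℝ) / Fintype.card ι ≤ Real.exp (-(s * t)) * 𝔼 i, Real.exp (s * g i) := by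
  rcases isEmpty_or_nonempty ι with hι | hι
  · simp
  have hcard : (0 : ℝ) < Fintype.card ι := by positivity
  have hmarkov : (#{i | t ≤ g i} : ℝ) * Real.exp (s * t) ≤ ∑ i, Real.exp (s * g i) := calc
    (#{i | t ≤ g i} : ℝ) * Real.exp (s * t) = ∑ i with t ≤ g i, Real.exp (s * t) := by
      rw [sum_const, nsmul_eq_mul]
    _ ≤ ∑ i with t ≤ g i, Real.exp (s * g i) := sum_le_sum fun i hi =>
      Real.exp_le_exp.2 (mul_le_mul_of_nonneg_left (mem_filter.1 hi).2 hs)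
    _ ≤ ∑ i, Real.exp (s * g i) :=
      sum_le_sum_of_subset_of_nonneg (filter_subset _ _) fun i _ _ => (Real.exp_pos _).le
  rw [Fintype.expect_eq_sum_div_card, div_le_iff₀ hcard, Real.exp_neg, ← mul_div_assoc,
    div_mul_cancel₀ _ hcard.ne', le_inv_mul_iff₀ (Real.exp_pos _)]
  linarith

namespace Equiv.Perm

variable {n : ℕ}

theorem decomposeFin_apply_fst (σ : Perm (Fin (n + 1))) : (decomposeFin σ).1 = σ 0 := by
  conv_rhs => rw [← decomposeFin.symm_apply_apply σ]
  rw [decomposeFin_symm_apply_zero]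

theorem decomposeFin_symm_mul_swap_succ (p : Fin (n + 1)) (e : Perm (Fin n)) (i j : Fin n) :
    decomposeFin.symm (p, e) * swap i.succ j.succ = decomposeFin.symm (p, e * swap i j) := by
  ext x
  induction x using Fin.cases with
  | zero =>
    rw [mul_apply, swap_apply_of_ne_of_ne (Fin.succ_ne_zero i).symm (Fin.succ_ne_zero j).symm]
    simp only [decomposeFin_symm_apply_zero]
  | succ x =>
    rw [mul_apply, (Fin.succ_injective n).swap_apply, decomposeFin_symm_apply_succ,
      decomposeFin_symm_apply_succ, mul_apply]

theorem expect_perm_fin_succ {M : Type*} [AddCommMonoid M] [Module ℚ≥0 M]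
    (F : Perm (Fin (n + 1)) → M) :
    𝔼 σ, F σ = 𝔼 p, 𝔼 e, F (decomposeFin.symm (p, e)) := by
  rw [Fintype.expect_equiv decomposeFin F (fun x => F (decomposeFin.symm x)) (by simp),
    ← univ_product_univ, ← expect_product' (f := fun p e => F (decomposeFin.symm (p, e)))]

theorem expect_decomposeFin_symm_eq_expect_filter {M : Type*} [AddCommMonoid M] [Module ℚ≥0 M]
    (F : Perm (Fin (n + 1)) → M) (p : Fin (n + 1)) :
    𝔼 e, F (decomposeFin.symm (p, e)) = 𝔼 σ with σ 0 = p, F σ := by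
  refine expect_nbij' (fun e => decomposeFin.symm (p, e)) (fun σ => (decomposeFin σ).2)
    (by simp) (by simp) (by simp) ?_ (by simp)
  intro σ hσ
  rw [← (mem_filter.1 hσ).2, ← decomposeFin_apply_fst, Prod.mk.eta, Equiv.symm_apply_apply]

theorem abs_expect_decomposeFin_symm_sub_le {u : ℝ} (f : Perm (Fin (n + 1)) → ℝ)
    (hf : ∀ σ a b, |f (swap a b * σ) - f σ| ≤ u) (p q : Fin (n + 1)) :
    |𝔼 e, f (decomposeFin.symm (p, e)) - 𝔼 e, f (decomposeFin.symm (q, e))| ≤ u := by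
  have hswap : 𝔼 σ with σ 0 = q, f σ = 𝔼 σ with σ 0 = p, f (swap p q * σ) := by
    refine (expect_equiv (Equiv.mulLeft (swap p q)) (fun σ => ?_) (fun _ _ => rfl)).symm
    simp [swap_apply_eq_iff]
  have hne : (univ.filter fun σ : Perm (Fin (n + 1)) => σ 0 = p).Nonempty :=
    ⟨decomposeFin.symm (p, 1), by simp⟩
  rw [expect_decomposeFin_symm_eq_expect_filter, expect_decomposeFin_symm_eq_expect_filter, hswap,
    ← expect_sub_distrib]
  refine (abs_expect_le _ _).trans ((expect_le_expect fun σ _ => ?_).trans (expect_const hne u).le)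
  rw [abs_sub_comm]
  exact hf σ p q

theorem expect_exp_mul_sub_expect_le_of_abs_mul_swap_sub_le {u : ℝ} (f : Perm (Fin n) → ℝ)
    (hf : ∀ σ i j, |f (σ * swap i j) - f σ| ≤ u) (t : ℝ) :
    𝔼 σ, Real.exp (t * (f σ - 𝔼 τ, f τ)) ≤ Real.exp (t ^ 2 * (n * u ^ 2) / 8) := by
  induction n with
  | zero => simp
  | succ n ih =>
    set F : Fin (n + 1) → Perm (Fin n) → ℝ := fun p e => f (decomposeFin.symm (p, e))
    set μ : Fin (n + 1) → ℝ := fun p => 𝔼 e, F p e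
    have hF (p : Fin (n + 1)) : ∀ e i j, |F p (e * swap i j) - F p e| ≤ u := fun e i j => by
      simpa only [F, ← decomposeFin_symm_mul_swap_succ] using hf _ _ _
    have hμ (p q : Fin (n + 1)) : |μ p - μ q| ≤ u :=
      abs_expect_decomposeFin_symm_sub_le f
        (fun σ a b => by rw [swap_mul_eq_mul_swap]; exact hf _ _ _) p q
    obtain ⟨p₀, -, hp₀⟩ := exists_min_image univ μ univ_nonempty
    have hμ_mem (p : Fin (n + 1)) : μ p ∈ Set.Icc (μ p₀) (μ p₀ + u) :=
      ⟨hp₀ p (mem_univ p), by linarith [(abs_le.1 (hμ p p₀)).2]⟩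
    have hmean : 𝔼 τ, f τ = 𝔼 p, μ p := expect_perm_fin_succ f
    calc 𝔼 σ, Real.exp (t * (f σ - 𝔼 τ, f τ))
        = 𝔼 p, Real.exp (t * (μ p - 𝔼 q, μ q)) * 𝔼 e, Real.exp (t * (F p e - μ p)) := by
          rw [expect_perm_fin_succ, hmean]
          refine expect_congr rfl fun p _ => ?_
          rw [mul_expect]
          refine expect_congr rfl fun e _ => ?_
          rw [← Real.exp_add]
          simp only [F]
          ring_nf
      _ ≤ 𝔼 p, Real.exp (t * (μ p - 𝔼 q, μ q)) * Real.exp (t ^ 2 * (n * u ^ 2) / 8) :=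
          expect_le_expect fun p _ =>
            mul_le_mul_of_nonneg_left (ih (F p) (hF p)) (Real.exp_pos _).le
      _ ≤ Real.exp (t ^ 2 * (μ p₀ + u - μ p₀) ^ 2 / 8) * Real.exp (t ^ 2 * (n * u ^ 2) / 8) := by
          rw [← expect_mul]
          gcongr
          exact Fintype.expect_exp_mul_sub_expect_le μ hμ_mem t
      _ = Real.exp (t ^ 2 * ((n + 1 : ℕ) * u ^ 2) / 8) := by
          rw [← Real.exp_add]
          push_cast
          ring_nf

end Equiv.Perm

open scoped Classical in
/-- Azuma–Hoeffding/McDiarmid type concentration for a uniformly random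
permutation: if `|f(π) - f(π')| ≤ u` whenever `π'` is obtained from `π` by composing with a
transposition, then `Pr(f(π) - E[f] ≤ -t) ≤ exp(-2t²/(n u²))` for every `t > 0`,
where `π` is uniform on the permutations of `[n]`. -/
theorem stmt_17 (n : ℕ) (u : ℝ) (f : Equiv.Perm (Fin n) → ℝ)
    (hf : ∀ (π : Equiv.Perm (Fin n)) (i j : Fin n),
      |f (π * Equiv.swap i j) - f π| ≤ u)
    (t : ℝ) (ht : 0 < t) :
    ((Finset.univ.filter fun π : Equiv.Perm (Fin n) =>
        f π - (∑ π' : Equiv.Perm (Fin n), f π') / (Fintype.card (Equiv.Perm (Fin n)) : ℝ)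
          ≤ -t).card : ℝ) / (Fintype.card (Equiv.Perm (Fin n)) : ℝ)
      ≤ Real.exp (-2 * t ^ 2 / (n * u ^ 2)) := by
  set c : ℝ := n * u ^ 2
  -- If `c = 0`, both `-2 t² / c` and `s = 4 t / c` are `0` by the convention `x / 0 = 0`.
  set s : ℝ := 4 * t / c
  have hs : 0 ≤ s := by positivity
  have hexponent : -(s * t) + s ^ 2 * c / 8 = -2 * t ^ 2 / c := by
    rcases eq_or_ne c 0 with hc | hc
    · simp [s, hc]
    · simp only [s]; field_simp; ring
  have hmgf := expect_exp_mul_sub_expect_le_of_abs_mul_swap_sub_le (fun π => -f π)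
    (fun π i j => by rw [neg_sub_neg, abs_sub_comm]; exact hf π i j) s
  rw [← Fintype.expect_eq_sum_div_card]
  calc _ = (#{π | t ≤ -f π - 𝔼 π', -f π'} : ℝ) / Fintype.card (Equiv.Perm (Fin n)) := by
        congr 3
        ext π
        simp only [mem_filter, mem_univ, true_and, expect_neg_distrib]
        constructor <;> intro <;> linarith
    _ ≤ Real.exp (-(s * t)) * 𝔼 π, Real.exp (s * (-f π - 𝔼 π', -f π')) :=
        Fintype.card_filter_ge_div_card_le_exp_mul_expect_exp _ hs t
    _ ≤ Real.exp (-(s * t)) * Real.exp (s ^ 2 * c / 8) := by gcongr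
    _ = Real.exp (-2 * t ^ 2 / c) := by rw [← Real.exp_add, hexponent]
end

section
/- Let G be a bipartite graph with parts A and B of size N, with minimum degree at least d₀N, and suppose that every two distinct vertices of A have at most d₂²N common neighbours in B. Let K ⊆ A with |K| = k ≥ 1 and L ⊆ B with |L| = ℓ, where 1 ≤ ℓ < N, let m = e_G(K, B∖L) denote the number of edges between K and B∖L, and assume m ≤ d₀kN. Then m·(m/(N−ℓ) − 1) + (d₀kN − m)·((d₀kN − m)/ℓ − 1) ≤ k(k−1)·d₂²·N. -/
/-!
Let `d b` be the number of neighbours of `b ∈ B` in `K`. Counting paths `a₁ - b - a₂` with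
`a₁, a₂ ∈ K` gives `∑ d b ^ 2 = ∑ codeg a₁ a₂ ≤ ∑ d b + k (k - 1) d₂² N`, the diagonal terms being
the degrees. Split both sums over `B ∖ L` and `L`; Cauchy–Schwarz gives `∑_{B∖L} d² ≥ m² / (N - ℓ)`
and `∑_L d² ≥ s² / ℓ`, where `s = ∑_L d ≥ d₀ k N - m` by the degree condition. As
`t ↦ t (t / ℓ - 1)` is convex and vanishes at `0`, and `d ≤ d²` for integers, the bound at `s`
passes to every `0 ≤ x ≤ s`, in particular to `x = d₀ k N - m`.
-/

open Finset

theorem mul_div_sub_one_le_sub {ℓ x v Q : ℝ} (hℓ : 0 ≤ ℓ) (hx : 0 ≤ x) (hxv : x ≤ v)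
    (hvQ : v ≤ Q) (hCS : v ^ 2 ≤ ℓ * Q) : x * (x / ℓ - 1) ≤ Q - v := by
  have hQ : 0 ≤ Q := by linarith
  have hv : v * (v / ℓ) ≤ Q := by
    rw [← mul_div_assoc, ← sq]
    exact div_le_of_le_mul₀ hℓ hQ (by linarith)
  calc x * (x / ℓ - 1) ≤ x * (v / ℓ - 1) := by gcongr
    _ ≤ Q - v := by
      rcases le_total (v / ℓ) 1 with h | h
      · nlinarith [mul_nonpos_of_nonneg_of_nonpos hx (sub_nonpos.2 h)]
      · nlinarith [mul_le_mul_of_nonneg_right hxv (sub_nonneg.2 h)]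

theorem mul_div_card_sub_one_le {β : Type*} (f : β → ℕ) (s : Finset β) {x : ℝ} (hx : 0 ≤ x)
    (hxs : x ≤ ∑ b ∈ s, (f b : ℝ)) :
    x * (x / #s - 1) ≤ ∑ b ∈ s, (f b : ℝ) ^ 2 - ∑ b ∈ s, (f b : ℝ) :=
  mul_div_sub_one_le_sub (Nat.cast_nonneg _) hx hxs
    (sum_le_sum fun b _ => by exact_mod_cast Nat.le_self_pow two_ne_zero (f b))
    sq_sum_le_card_mul_sum_sq

namespace Bipartite

variable {α β : Type*} [DecidableEq α] [DecidableEq β] (E : Finset (α × β))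

def neighborCount (K : Finset α) (b : β) : ℕ := #{a ∈ K | (a, b) ∈ E}

def codegree [Fintype β] (a₁ a₂ : α) : ℕ := #{b | (a₁, b) ∈ E ∧ (a₂, b) ∈ E}

theorem sum_neighborCount (K : Finset α) (t : Finset β) :
    ∑ b ∈ t, neighborCount E K b = #{e ∈ E | e.1 ∈ K ∧ e.2 ∈ t} := by
  calc ∑ b ∈ t, neighborCount E K b = #{e ∈ K ×ˢ t | e ∈ E} := by
        simp only [neighborCount, card_filter, sum_product_right]
    _ = #{e ∈ E | e.1 ∈ K ∧ e.2 ∈ t} := by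
        congr 1
        ext
        simp [and_comm]

variable [Fintype β]

theorem codegree_self (a : α) : codegree E a a = #{e ∈ E | e.1 = a} := by
  rw [codegree, filter_congr fun _ _ => and_self_iff]
  refine card_nbij' (Prod.mk a) Prod.snd ?_ ?_ (fun _ _ => rfl) ?_
  · intro b hb; simpa using hb
  · rintro ⟨a', b⟩ he
    obtain ⟨he, rfl⟩ := mem_filter.1 he
    simpa using he
  · rintro ⟨a', b⟩ he
    obtain ⟨-, rfl⟩ := mem_filter.1 he
    rfl

theorem sum_codegree_self (K : Finset α) :
    ∑ a ∈ K, codegree E a a = ∑ b, neighborCount E K b := by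
  simp only [codegree, neighborCount, and_self, card_filter]
  exact sum_comm

theorem sum_neighborCount_sq (K : Finset α) :
    ∑ b, neighborCount E K b ^ 2 = ∑ a₁ ∈ K, ∑ a₂ ∈ K, codegree E a₁ a₂ := by
  simp only [codegree, neighborCount, card_filter, sq, sum_mul_sum, ite_zero_mul_ite_zero, mul_one]
  rw [sum_comm]
  exact sum_congr rfl fun _ _ => sum_comm

theorem sum_sum_codegree_le (K : Finset α) {c : ℝ}
    (hcodeg : ∀ a₁ a₂ : α, a₁ ≠ a₂ → (codegree E a₁ a₂ : ℝ) ≤ c) :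
    ∑ a₁ ∈ K, ∑ a₂ ∈ K, (codegree E a₁ a₂ : ℝ)
      ≤ ∑ a ∈ K, (codegree E a a : ℝ) + #K * (#K - 1) * c := by
  calc ∑ a₁ ∈ K, ∑ a₂ ∈ K, (codegree E a₁ a₂ : ℝ)
      ≤ ∑ a ∈ K, ((codegree E a a : ℝ) + (#K - 1) * c) := by
        refine sum_le_sum fun a ha => ?_
        rw [← add_sum_erase K _ ha]
        gcongr
        have hcard : (#(K.erase a) : ℝ) = #K - 1 := by
          rw [← card_erase_add_one ha]; push_cast; ring
        calc ∑ a₂ ∈ K.erase a, (codegree E a a₂ : ℝ) ≤ #(K.erase a) • c :=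
              sum_le_card_nsmul _ _ _ fun a₂ ha₂ => hcodeg a a₂ (ne_of_mem_erase ha₂).symm
          _ = (#K - 1) * c := by rw [nsmul_eq_mul, hcard]
    _ = _ := by rw [sum_add_distrib, sum_const, nsmul_eq_mul]; ring

theorem sum_sq_neighborCount_le (K : Finset α) {c : ℝ}
    (hcodeg : ∀ a₁ a₂ : α, a₁ ≠ a₂ → (codegree E a₁ a₂ : ℝ) ≤ c) :
    ∑ b, (neighborCount E K b : ℝ) ^ 2 ≤ ∑ b, (neighborCount E K b : ℝ) + #K * (#K - 1) * c := by
  have hsq := congrArg (Nat.cast (R := ℝ)) (sum_neighborCount_sq E K)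
  have hdiag := congrArg (Nat.cast (R := ℝ)) (sum_codegree_self E K)
  push_cast at hsq hdiag
  rw [hsq, ← hdiag]
  exact sum_sum_codegree_le E K hcodeg

theorem card_mul_le_sum_neighborCount (K : Finset α) {δ : ℝ}
    (hdeg : ∀ a, δ ≤ #{e ∈ E | e.1 = a}) :
    #K * δ ≤ ∑ b, (neighborCount E K b : ℝ) := by
  have hdiag := congrArg (Nat.cast (R := ℝ)) (sum_codegree_self E K)
  push_cast at hdiag
  rw [← hdiag, ← nsmul_eq_mul, ← sum_const]
  exact sum_le_sum fun a _ => codegree_self E a ▸ hdeg a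

end Bipartite

open Bipartite

open scoped Classical in
theorem stmt_18_general (N : ℕ) (E : Finset (Fin N × Fin N)) (d₀ d₂ : ℝ)
    (hdegA : ∀ a : Fin N, d₀ * N ≤ ((E.filter fun e => e.1 = a).card : ℝ))
    (hcodeg : ∀ a₁ a₂ : Fin N, a₁ ≠ a₂ →
      ((Finset.univ.filter fun b => (a₁, b) ∈ E ∧ (a₂, b) ∈ E).card : ℝ) ≤ d₂ ^ 2 * N)
    (K L : Finset (Fin N)) (k ℓ : ℕ) (hK : K.card = k) (hL : L.card = ℓ)
    (m : ℝ) (hm : m = ((E.filter fun e => e.1 ∈ K ∧ e.2 ∉ L).card : ℝ))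
    (hmle : m ≤ d₀ * k * N) :
    m * (m / ((N : ℝ) - (ℓ : ℝ)) - 1) +
        (d₀ * k * N - m) * ((d₀ * k * N - m) / (ℓ : ℝ) - 1)
      ≤ (k : ℝ) * ((k : ℝ) - 1) * d₂ ^ 2 * N := by
  set f := neighborCount E K
  have hm_sum : m = ∑ b ∈ Lᶜ, (f b : ℝ) := by
    rw [hm, ← Nat.cast_sum, sum_neighborCount]
    simp only [mem_compl]
  have hℓN : ℓ ≤ N := hL ▸ (card_le_univ L).trans_eq (Fintype.card_fin N)
  have hcard : (#Lᶜ : ℝ) = N - ℓ := by rw [card_compl, Fintype.card_fin, hL, Nat.cast_sub hℓN]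
  have hdeg : d₀ * k * N ≤ ∑ b, (f b : ℝ) := by
    rw [← hK, mul_assoc, mul_left_comm]
    exact card_mul_le_sum_neighborCount E K hdegA
  have hsq := sum_sq_neighborCount_le E K hcodeg
  have hout := mul_div_card_sub_one_le f Lᶜ (hm ▸ Nat.cast_nonneg _) hm_sum.le
  have hin := mul_div_card_sub_one_le f L (x := d₀ * k * N - m) (by linarith)
    (by linarith [sum_add_sum_compl L fun b => (f b : ℝ)])
  rw [← hm_sum, hcard] at hout
  rw [hL] at hin
  rw [hK] at hsq
  linarith [sum_add_sum_compl L fun b => (f b : ℝ), sum_add_sum_compl L fun b => (f b : ℝ) ^ 2]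

open scoped Classical in
/-- the double-counting inequality for bipartite graphs with parts of
size `N`, minimum degree at least `d₀N` and codegrees (of two distinct vertices of `A`)
at most `d₂²N`: for `K ⊆ A` with `|K| = k ≥ 1`, `L ⊆ B` with `|L| = ℓ`, `1 ≤ ℓ < N`, and
`m = e(K, B∖L) ≤ d₀kN`, one has
`m(m/(N-ℓ) - 1) + (d₀kN - m)((d₀kN - m)/ℓ - 1) ≤ k(k-1)d₂²N`. -/
theorem stmt_18 (N : ℕ) (E : Finset (Fin N × Fin N)) (d₀ d₂ : ℝ)
    (hdegA : ∀ a : Fin N, d₀ * N ≤ ((E.filter fun e => e.1 = a).card : ℝ))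
    (hdegB : ∀ b : Fin N, d₀ * N ≤ ((E.filter fun e => e.2 = b).card : ℝ))
    (hcodeg : ∀ a₁ a₂ : Fin N, a₁ ≠ a₂ →
      ((Finset.univ.filter fun b => (a₁, b) ∈ E ∧ (a₂, b) ∈ E).card : ℝ) ≤ d₂ ^ 2 * N)
    (K L : Finset (Fin N)) (k ℓ : ℕ) (hK : K.card = k) (hL : L.card = ℓ)
    (hk1 : 1 ≤ k) (hl1 : 1 ≤ ℓ) (hlN : ℓ < N)
    (m : ℝ) (hm : m = ((E.filter fun e => e.1 ∈ K ∧ e.2 ∉ L).card : ℝ))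
    (hmle : m ≤ d₀ * k * N) :
    m * (m / ((N : ℝ) - (ℓ : ℝ)) - 1) +
        (d₀ * k * N - m) * ((d₀ * k * N - m) / (ℓ : ℝ) - 1)
      ≤ (k : ℝ) * ((k : ℝ) - 1) * d₂ ^ 2 * N :=
  stmt_18_general N E d₀ d₂ hdegA hcodeg K L k ℓ hK hL m hm hmle
end
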